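/- arXiv:1906.09593 — 6 statements merged into one kernel-verified Lean document; each statement's English description precedes it below -/
import Mathlib

section
/- Let J ⊆ R = 𝕂[[z,x₁,…,xₙ]] be an ideal of order c with 1 ≤ c < ∞, and let K = coeff_V(J) be its coefficient ideal with respect to V = V(z). Then ord K ≥ c!. -/
noncomputable section

/-- The order of an element `g` with respect to an ideal `I`:  `sup {k : ℕ | g ∈ I ^ k}`,
with value in `ℕ∞` (so that the order of `0` is `⊤`). -/
def elemOrd {A : Type*} [CommRing A] (I : Ideal A) (g : A) : ℕ∞ :=
  sSup ((fun k : ℕ => (k : ℕ∞)) '' {k : ℕ | g ∈ I ^ k})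

/-- The order of an ideal `J` with respect to an ideal `I`: `sup {k : ℕ | J ⊆ I ^ k}`. -/
def idealOrd {A : Type*} [CommRing A] (I J : Ideal A) : ℕ∞ :=
  sSup ((fun k : ℕ => (k : ℕ∞)) '' {k : ℕ | J ≤ I ^ k})

/-- The coefficient ideal `K = coeff_{V(z)}(J) = Σ_{i<c} (f_i : f ∈ J)^{c!/(c−i)}` of an ideal
`J ⊆ R = 𝕂[[z,x₁,…,xₙ]] = Q[[z]]` with respect to the hypersurface `V(z)`, an ideal of
`Q = 𝕂[[x₁,…,xₙ]]`. -/
def coeffIdeal {𝕂 : Type*} [Field 𝕂] {n : ℕ}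
    (J : Ideal (PowerSeries (MvPowerSeries (Fin n) 𝕂))) (c : ℕ) :
    Ideal (MvPowerSeries (Fin n) 𝕂) :=
  ∑ i ∈ Finset.range c,
    (Ideal.span ((PowerSeries.coeff (R := MvPowerSeries (Fin n) 𝕂) i) '' J)) ^ (c.factorial / (c - i))

/-! An element of `m_R ^ c` has its `z ^ i`-coefficient in `m_Q ^ (c - i)`, since each factor
from `m_R` either lowers the `z`-degree available to the others or contributes a constant
coefficient in `m_Q`. Hence `(f_i : f ∈ J) ^ (c! / (c - i)) ⊆ m_Q ^ c!` for every `i < c`. -/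

lemma le_pow_of_idealOrd_eq {A : Type*} [CommRing A] {I J : Ideal A} {c : ℕ}
    (hc : idealOrd I J = c) : J ≤ I ^ c := by
  have : Nonempty ((fun k : ℕ => (k : ℕ∞)) '' {k : ℕ | J ≤ I ^ k}) := ⟨0, 0, by simp, rfl⟩
  obtain ⟨k, hk, hkc⟩ :=
    ENat.sSup_mem_of_nonempty_of_lt_top (hc ▸ ENat.natCast_lt_top c : idealOrd I J < ⊤)
  rwa [← Nat.cast_inj.mp (hkc.trans hc)]

lemma le_idealOrd_of_le_pow {A : Type*} [CommRing A] {I J : Ideal A} {k : ℕ}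
    (h : J ≤ I ^ k) : (k : ℕ∞) ≤ idealOrd I J :=
  le_sSup ⟨k, h, rfl⟩

namespace PowerSeries

variable {Q : Type*} [CommRing Q] [IsLocalRing Q]

lemma coeff_mem_maximalIdeal_pow {c : ℕ} {g : Q⟦X⟧}
    (hg : g ∈ IsLocalRing.maximalIdeal Q⟦X⟧ ^ c) (i : ℕ) :
    coeff i g ∈ IsLocalRing.maximalIdeal Q ^ (c - i) := by
  induction c generalizing g i with
  | zero => simp
  | succ c ih =>
    rw [pow_succ] at hg
    induction hg using Submodule.mul_induction_on' with
    | mem_mul_mem a ha b hb =>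
      rw [coeff_mul]
      refine Ideal.sum_mem _ fun p hp => ?_
      rw [Finset.HasAntidiagonal.mem_antidiagonal] at hp
      rcases Nat.eq_zero_or_pos p.2 with h2 | h2
      · have hb0 : coeff p.2 b ∈ IsLocalRing.maximalIdeal Q := by
          rw [h2, coeff_zero_eq_constantCoeff]
          exact fun hu => hb ((isUnit_iff_constantCoeff).mpr hu)
        have := Ideal.mul_mem_mul (ih ha p.1) hb0
        rw [← pow_succ] at this
        exact Ideal.pow_le_pow_right (by omega) this
      · exact Ideal.pow_le_pow_right (by omega) (Ideal.mul_mem_right _ _ (ih ha p.1))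
    | add x _ y _ hx hy => simpa only [map_add] using Ideal.add_mem _ hx hy

lemma span_coeff_le_maximalIdeal_pow {J : Ideal Q⟦X⟧} {c : ℕ}
    (hJ : J ≤ IsLocalRing.maximalIdeal Q⟦X⟧ ^ c) (i : ℕ) :
    Ideal.span (coeff i '' J) ≤ IsLocalRing.maximalIdeal Q ^ (c - i) := by
  rw [Ideal.span_le]
  rintro _ ⟨f, hf, rfl⟩
  exact coeff_mem_maximalIdeal_pow (hJ hf) i

end PowerSeries

lemma coeffIdeal_le_maximalIdeal_pow_factorial {𝕂 : Type*} [Field 𝕂] {n : ℕ}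
    {J : Ideal (PowerSeries (MvPowerSeries (Fin n) 𝕂))} {c : ℕ}
    (hJ : J ≤ IsLocalRing.maximalIdeal _ ^ c) :
    coeffIdeal J c ≤ IsLocalRing.maximalIdeal (MvPowerSeries (Fin n) 𝕂) ^ c.factorial := by
  refine Finset.sum_induction _ (· ≤ _) (fun _ _ => sup_le) bot_le fun i hi => ?_
  have hi : i < c := Finset.mem_range.mp hi
  calc _ ≤ (IsLocalRing.maximalIdeal _ ^ (c - i)) ^ (c.factorial / (c - i)) :=
        Ideal.pow_right_mono (PowerSeries.span_coeff_le_maximalIdeal_pow hJ i) _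
    _ = _ := by rw [← pow_mul, Nat.mul_div_cancel' (Nat.dvd_factorial (by omega) (by omega))]

theorem coeff_ideal_order_ge_factorial_general {𝕂 : Type*} [Field 𝕂] {n : ℕ}
    (J : Ideal (PowerSeries (MvPowerSeries (Fin n) 𝕂))) (c : ℕ)
    (hc : idealOrd (IsLocalRing.maximalIdeal (PowerSeries (MvPowerSeries (Fin n) 𝕂))) J
      = (c : ℕ∞)) :
    idealOrd (IsLocalRing.maximalIdeal (MvPowerSeries (Fin n) 𝕂)) (coeffIdeal J c)
      ≥ (c.factorial : ℕ∞) :=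
  le_idealOrd_of_le_pow (coeffIdeal_le_maximalIdeal_pow_factorial (le_pow_of_idealOrd_eq hc))

/-- Let `J ⊆ R = 𝕂[[z,x₁,…,xₙ]]` be an ideal of order `c` with `1 ≤ c < ∞`, and let
`K = coeff_{V(z)}(J)` be its coefficient ideal.  Then `ord K ≥ c!`. -/
theorem coeff_ideal_order_ge_factorial {𝕂 : Type*} [Field 𝕂] {n : ℕ}
    (J : Ideal (PowerSeries (MvPowerSeries (Fin n) 𝕂))) (c : ℕ) (hc1 : 1 ≤ c)
    (hc : idealOrd (IsLocalRing.maximalIdeal (PowerSeries (MvPowerSeries (Fin n) 𝕂))) J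
      = (c : ℕ∞)) :
    idealOrd (IsLocalRing.maximalIdeal (MvPowerSeries (Fin n) 𝕂)) (coeffIdeal J c)
      ≥ (c.factorial : ℕ∞) :=
  coeff_ideal_order_ge_factorial_general J c hc
end
end

section
/- Let J ⊆ R = 𝕂[[z,x₁,…,xₙ]] be an ideal of order c with 1 ≤ c < ∞, and let K = coeff_V(J) be its coefficient ideal with respect to V = V(z). Then ord K > c! holds if and only if J ≡ (z^c) modulo m_R^{c+1}, i.e., if and only if J + m_R^{c+1} = (z^c) + m_R^{c+1}. -/
set_option synthInstance.maxHeartbeats 400000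
set_option maxHeartbeats 800000

noncomputable section

/-! Write `f = Σ fᵢ zⁱ`. The power `𝔪_R ^ k` consists of the `f` with `fᵢ ∈ 𝔪_Q ^ (k - i)`,
and the `𝔪_Q`-adic order is the total-degree order, hence multiplicative; so
`K ⊆ 𝔪_Q ^ (c! + 1)` iff `fᵢ ∈ 𝔪_Q ^ (c - i + 1)` for all `f ∈ J` and `i < c`, i.e. iff
every `f ∈ J` is congruent to `f_c z^c` modulo `𝔪_R ^ (c + 1)`. An element of `J` of order
exactly `c` then has a unit coefficient `f_c`, which puts `z^c` into `J + 𝔪_R ^ (c + 1)`. -/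

open IsLocalRing

theorem natCast_lt_idealOrd_iff {A : Type*} [CommRing A] (I J : Ideal A) (N : ℕ) :
    (N : ℕ∞) < idealOrd I J ↔ J ≤ I ^ (N + 1) := by
  constructor
  · intro h
    obtain ⟨_, ⟨k, hk, rfl⟩, hNk⟩ := lt_sSup_iff.mp h
    exact hk.trans (Ideal.pow_le_pow_right (Nat.succ_le_of_lt (Nat.cast_lt.mp hNk)))
  · intro h
    exact (Nat.cast_lt.mpr N.lt_succ_self).trans_le (le_sSup ⟨N + 1, h, rfl⟩)

theorem Ideal.apply_mem_pow_of_map_le {A B : Type*} [CommRing A] [CommRing B] {f : A →+* B}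
    {I : Ideal A} {I' : Ideal B} (h : I.map f ≤ I') {a : A} {j : ℕ} (ha : a ∈ I ^ j) :
    f a ∈ I' ^ j :=
  Ideal.pow_right_mono h j (Ideal.map_pow f I j ▸ Ideal.mem_map_of_mem f ha)

namespace PowerSeries

variable {A : Type*} [CommRing A]

theorem mem_maximalIdeal_iff [IsLocalRing A] {f : A⟦X⟧} :
    f ∈ maximalIdeal A⟦X⟧ ↔ constantCoeff f ∈ maximalIdeal A := by
  simp only [mem_maximalIdeal, mem_nonunits_iff, isUnit_iff_constantCoeff]

theorem X_mem_maximalIdeal [IsLocalRing A] : (X : A⟦X⟧) ∈ maximalIdeal A⟦X⟧ := by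
  rw [mem_maximalIdeal_iff, constantCoeff_X]
  exact zero_mem _

theorem map_C_maximalIdeal_le [IsLocalRing A] :
    (maximalIdeal A).map (C : A →+* A⟦X⟧) ≤ maximalIdeal A⟦X⟧ :=
  Ideal.map_le_iff_le_comap.mpr fun a ha => by
    rwa [Ideal.mem_comap, mem_maximalIdeal_iff, constantCoeff_C]

/-- For `I = 𝔪_A` this is `𝔪_{A⟦X⟧} ^ k` (`mem_maximalIdeal_pow_iff`). -/
def coeffMemPowIdeal (I : Ideal A) (k : ℕ) : Ideal A⟦X⟧ where
  carrier := {f | ∀ i, coeff i f ∈ I ^ (k - i)}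
  add_mem' hf hg i := by
    rw [map_add]
    exact add_mem (hf i) (hg i)
  zero_mem' i := by simp
  smul_mem' r f hf i := by
    rw [smul_eq_mul, coeff_mul]
    refine sum_mem fun p hp => Ideal.mul_mem_left _ _ (Ideal.pow_le_pow_right ?_ (hf p.2))
    have := Finset.HasAntidiagonal.mem_antidiagonal.mp hp
    omega

theorem coeffMemPowIdeal_mul_le (I : Ideal A) (j l : ℕ) :
    coeffMemPowIdeal I j * coeffMemPowIdeal I l ≤ coeffMemPowIdeal I (j + l) := by
  refine Ideal.mul_le.mpr fun f hf g hg i => ?_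
  rw [coeff_mul]
  refine sum_mem fun p hp => ?_
  have := Finset.HasAntidiagonal.mem_antidiagonal.mp hp
  have hfg := Ideal.mul_mem_mul (hf p.1) (hg p.2)
  rw [← pow_add] at hfg
  exact Ideal.pow_le_pow_right (by omega) hfg

theorem maximalIdeal_pow_le_coeffMemPowIdeal [IsLocalRing A] (k : ℕ) :
    maximalIdeal A⟦X⟧ ^ k ≤ coeffMemPowIdeal (maximalIdeal A) k := by
  induction k with
  | zero => exact fun f _ i => by simp
  | succ k ih =>
    have hm : maximalIdeal A⟦X⟧ ≤ coeffMemPowIdeal (maximalIdeal A) 1 := by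
      rintro f hf (_ | i)
      · simpa using mem_maximalIdeal_iff.mp hf
      · simp
    rw [pow_succ]
    exact (Ideal.mul_mono ih hm).trans (coeffMemPowIdeal_mul_le _ k 1)

theorem mem_maximalIdeal_pow_iff [IsLocalRing A] {k : ℕ} {f : A⟦X⟧} :
    f ∈ maximalIdeal A⟦X⟧ ^ k ↔ ∀ i, coeff i f ∈ maximalIdeal A ^ (k - i) := by
  refine ⟨fun h => maximalIdeal_pow_le_coeffMemPowIdeal k h, fun h => ?_⟩
  induction k generalizing f with
  | zero => simp
  | succ k ih =>
    have hshift : mk (fun p => coeff (p + 1) f) ∈ maximalIdeal A⟦X⟧ ^ k :=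
      ih fun i => by simpa only [coeff_mk, Nat.add_sub_add_right] using h (i + 1)
    have hconst : C (constantCoeff f) ∈ maximalIdeal A⟦X⟧ ^ (k + 1) :=
      Ideal.apply_mem_pow_of_map_le (map_C_maximalIdeal_le (A := A))
        (by simpa only [coeff_zero_eq_constantCoeff_apply, Nat.sub_zero] using h 0)
    rw [eq_shift_mul_X_add_const f, pow_succ]
    exact add_mem (Ideal.mul_mem_mul hshift X_mem_maximalIdeal) hconst

section IsLocalRing

variable [IsLocalRing A] {J : Ideal A⟦X⟧} {c : ℕ}

theorem sub_C_coeff_mul_X_pow_mem_maximalIdeal_pow {f : A⟦X⟧}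
    (h : ∀ i < c, coeff i f ∈ maximalIdeal A ^ (c - i + 1)) :
    f - C (coeff c f) * X ^ c ∈ maximalIdeal A⟦X⟧ ^ (c + 1) := by
  refine mem_maximalIdeal_pow_iff.mpr fun i => ?_
  rw [map_sub, coeff_C_mul_X_pow]
  rcases lt_trichotomy i c with hi | rfl | hi
  · rw [if_neg hi.ne, sub_zero, show c + 1 - i = c - i + 1 by omega]
    exact h i hi
  · rw [if_pos rfl, sub_self]
    exact zero_mem _
  · rw [show c + 1 - i = 0 by omega, pow_zero, Ideal.one_eq_top]
    exact Submodule.mem_top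

/-- An element of `J` of order exactly `c` has a unit as its `X ^ c`-coefficient, which
lets one solve for `X ^ c` modulo `𝔪 ^ (c + 1)`. -/
theorem X_pow_mem_sup_maximalIdeal_pow (hJ : ¬J ≤ maximalIdeal A⟦X⟧ ^ (c + 1))
    (h : ∀ i < c, ∀ f ∈ J, coeff i f ∈ maximalIdeal A ^ (c - i + 1)) :
    X ^ c ∈ J ⊔ maximalIdeal A⟦X⟧ ^ (c + 1) := by
  obtain ⟨f, hfJ, hf⟩ := Set.not_subset.mp hJ
  have hrest := sub_C_coeff_mul_X_pow_mem_maximalIdeal_pow fun i hi => h i hi f hfJ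
  have hunit : IsUnit (C (coeff c f)) := by
    rw [isUnit_iff_constantCoeff, constantCoeff_C, ← notMem_maximalIdeal]
    intro hc
    have hlead : C (coeff c f) * X ^ c ∈ maximalIdeal A⟦X⟧ ^ (c + 1) := by
      rw [pow_succ']
      exact Ideal.mul_mem_mul (map_C_maximalIdeal_le (Ideal.mem_map_of_mem C hc))
        (Ideal.pow_mem_pow X_mem_maximalIdeal c)
    exact hf (by simpa using add_mem hrest hlead)
  have hXc : X ^ c = (↑hunit.unit⁻¹ : A⟦X⟧) * (f - (f - C (coeff c f) * X ^ c)) := by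
    rw [sub_sub_cancel, ← mul_assoc, IsUnit.val_inv_mul, one_mul]
  rw [hXc]
  exact Ideal.mul_mem_left _ _ (sub_mem (Ideal.mem_sup_left hfJ) (Ideal.mem_sup_right hrest))

theorem sup_maximalIdeal_pow_eq_span_X_pow_sup_iff (hJ : ¬J ≤ maximalIdeal A⟦X⟧ ^ (c + 1)) :
    J ⊔ maximalIdeal A⟦X⟧ ^ (c + 1) = Ideal.span {X ^ c} ⊔ maximalIdeal A⟦X⟧ ^ (c + 1) ↔
      ∀ i < c, ∀ f ∈ J, coeff i f ∈ maximalIdeal A ^ (c - i + 1) := by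
  constructor
  · intro hJc i hi f hf
    obtain ⟨_, hp, q, hq, rfl⟩ :=
      Submodule.mem_sup.mp (hJc ▸ Ideal.mem_sup_left hf : f ∈ Ideal.span {X ^ c} ⊔ _)
    obtain ⟨r, rfl⟩ := Ideal.mem_span_singleton'.mp hp
    rw [map_add, coeff_mul_X_pow', if_neg (by omega), zero_add,
      show c - i + 1 = c + 1 - i by omega]
    exact mem_maximalIdeal_pow_iff.mp hq i
  · intro h
    refine le_antisymm (sup_le (fun f hf => ?_) le_sup_right) (sup_le ?_ le_sup_right)
    · rw [← add_sub_cancel (C (coeff c f) * X ^ c) f]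
      exact add_mem (Ideal.mem_sup_left (Ideal.mem_span_singleton.mpr (dvd_mul_left _ _)))
        (Ideal.mem_sup_right (sub_C_coeff_mul_X_pow_mem_maximalIdeal_pow fun i hi => h i hi f hf))
    · rw [Ideal.span_le, Set.singleton_subset_iff]
      exact X_pow_mem_sup_maximalIdeal_pow hJ h

end IsLocalRing

end PowerSeries

theorem Finsupp.degree_cons {n : ℕ} (i : ℕ) (x : Fin n →₀ ℕ) :
    (Finsupp.cons i x).degree = i + x.degree := by
  simp [Finsupp.degree_eq_sum, Fin.sum_univ_succ]

namespace MvPowerSeries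

variable {𝕂 : Type*} [Field 𝕂]

theorem order_pow {σ R : Type*} [CommSemiring R] [NoZeroDivisors R] [Nontrivial R]
    (f : MvPowerSeries σ R) (e : ℕ) : (f ^ e).order = e • f.order := by
  simpa using order_prod (fun _ => f) (Finset.range e)

theorem mem_maximalIdeal_iff {σ : Type*} {g : MvPowerSeries σ 𝕂} :
    g ∈ maximalIdeal (MvPowerSeries σ 𝕂) ↔ constantCoeff g = 0 := by
  rw [mem_maximalIdeal, mem_nonunits_iff, isUnit_iff_constantCoeff, isUnit_iff_ne_zero, not_not]

theorem le_order_of_mem_maximalIdeal_pow {σ : Type*} {k : ℕ} {g : MvPowerSeries σ 𝕂}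
    (h : g ∈ maximalIdeal (MvPowerSeries σ 𝕂) ^ k) : (k : ℕ∞) ≤ g.order := by
  induction k generalizing g with
  | zero => simp
  | succ k ih =>
    rw [pow_succ] at h
    refine Submodule.mul_induction_on h (fun a ha b hb => ?_)
      fun a b ha hb => (le_min ha hb).trans min_order_le_add
    have hb' : 1 ≤ b.order := one_le_order_iff_constCoeff_eq_zero.mpr (mem_maximalIdeal_iff.mp hb)
    have hab : ((k + 1 : ℕ) : ℕ∞) ≤ a.order + b.order := by
      push_cast
      exact add_le_add (ih ha) hb'
    exact hab.trans le_order_mul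

theorem mem_maximalIdeal_pow_of_le_order {n k : ℕ} {g : MvPowerSeries (Fin n) 𝕂}
    (h : (k : ℕ∞) ≤ g.order) : g ∈ maximalIdeal (MvPowerSeries (Fin n) 𝕂) ^ k := by
  induction n generalizing k with
  | zero =>
    rcases Nat.eq_zero_or_pos k with rfl | hk
    · simp
    convert zero_mem (maximalIdeal (MvPowerSeries (Fin 0) 𝕂) ^ k)
    ext d
    exact coeff_of_lt_order (lt_of_lt_of_le (by simpa [Finsupp.degree_eq_sum] using hk) h)
  | succ n ih =>
    have hg : finSuccEquiv 𝕂 n g ∈ maximalIdeal (PowerSeries (MvPowerSeries (Fin n) 𝕂)) ^ k := by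
      refine PowerSeries.mem_maximalIdeal_pow_iff.mpr fun i => ih (nat_le_order fun x hx => ?_)
      rw [coeff_coeff_finSuccEquiv]
      refine coeff_of_lt_order ((Nat.cast_lt.mpr ?_).trans_le h)
      rw [Finsupp.degree_cons]
      omega
    simpa using Ideal.apply_mem_pow_of_map_le
      (map_maximalIdeal_le ((finSuccEquiv 𝕂 n).symm : _ →+* MvPowerSeries (Fin (n + 1)) 𝕂)) hg

theorem mem_maximalIdeal_pow_iff_le_order {n k : ℕ} {g : MvPowerSeries (Fin n) 𝕂} :
    g ∈ maximalIdeal (MvPowerSeries (Fin n) 𝕂) ^ k ↔ (k : ℕ∞) ≤ g.order :=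
  ⟨le_order_of_mem_maximalIdeal_pow, mem_maximalIdeal_pow_of_le_order⟩

/-- The `𝔪`-adic order on `𝕂⟦x₁, …, xₙ⟧` is the total-degree order, which is multiplicative. -/
theorem mem_maximalIdeal_pow_succ_of_pow_mem {n e w : ℕ} {g : MvPowerSeries (Fin n) 𝕂}
    (h : g ^ e ∈ maximalIdeal (MvPowerSeries (Fin n) 𝕂) ^ (e * w + 1)) :
    g ∈ maximalIdeal (MvPowerSeries (Fin n) 𝕂) ^ (w + 1) := by
  rw [mem_maximalIdeal_pow_iff_le_order, order_pow] at h
  rw [mem_maximalIdeal_pow_iff_le_order]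
  cases hg : g.order with
  | top => exact le_top
  | coe p =>
    rw [hg, nsmul_eq_mul] at h
    have hp : e * w < e * p := by exact_mod_cast h
    exact_mod_cast Nat.lt_of_mul_lt_mul_left hp

theorem pow_le_maximalIdeal_pow_iff {n e w : ℕ} {I : Ideal (MvPowerSeries (Fin n) 𝕂)}
    (he : 0 < e) :
    I ^ e ≤ maximalIdeal (MvPowerSeries (Fin n) 𝕂) ^ (e * w + 1) ↔
      I ≤ maximalIdeal (MvPowerSeries (Fin n) 𝕂) ^ (w + 1) := by
  refine ⟨fun h g hg => mem_maximalIdeal_pow_succ_of_pow_mem (h (Ideal.pow_mem_pow hg e)),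
    fun h => (Ideal.pow_right_mono h e).trans ?_⟩
  rw [← pow_mul]
  exact Ideal.pow_le_pow_right (by nlinarith)

end MvPowerSeries

theorem coeff_ideal_order_gt_factorial_iff_general {𝕂 : Type*} [Field 𝕂] {n : ℕ}
    (J : Ideal (PowerSeries (MvPowerSeries (Fin n) 𝕂))) (c : ℕ)
    (hc : idealOrd (IsLocalRing.maximalIdeal (PowerSeries (MvPowerSeries (Fin n) 𝕂))) J
      = (c : ℕ∞)) :
    idealOrd (IsLocalRing.maximalIdeal (MvPowerSeries (Fin n) 𝕂)) (coeffIdeal J c)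
        > (c.factorial : ℕ∞)
      ↔ J ⊔ (IsLocalRing.maximalIdeal (PowerSeries (MvPowerSeries (Fin n) 𝕂))) ^ (c + 1)
          = Ideal.span {(PowerSeries.X : PowerSeries (MvPowerSeries (Fin n) 𝕂)) ^ c}
            ⊔ (IsLocalRing.maximalIdeal (PowerSeries (MvPowerSeries (Fin n) 𝕂))) ^ (c + 1) := by
  have hJ : ¬J ≤ maximalIdeal _ ^ (c + 1) := fun h => by
    simpa [hc] using (natCast_lt_idealOrd_iff _ J c).mpr h
  rw [PowerSeries.sup_maximalIdeal_pow_eq_span_X_pow_sup_iff hJ, gt_iff_lt,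
    natCast_lt_idealOrd_iff, coeffIdeal, Ideal.sum_eq_sup, Finset.sup_le_iff]
  refine forall_congr' fun i => ?_
  rw [Finset.mem_range]
  refine imp_congr_right fun hi => ?_
  have hexp : c.factorial + 1 = c.factorial / (c - i) * (c - i) + 1 := by
    rw [Nat.div_mul_cancel (Nat.dvd_factorial (by omega) (by omega))]
  have hpos : 0 < c.factorial / (c - i) :=
    Nat.div_pos ((Nat.sub_le c i).trans c.self_le_factorial) (by omega)
  rw [hexp, MvPowerSeries.pow_le_maximalIdeal_pow_iff hpos, Ideal.span_le, Set.image_subset_iff]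
  rfl

/-- Let `J ⊆ R = 𝕂[[z,x₁,…,xₙ]]` be an ideal of order `c` with `1 ≤ c < ∞`, and let
`K = coeff_{V(z)}(J)` be its coefficient ideal.  Then `ord K > c!` if and only if
`J ≡ (z^c)` modulo `m_R^{c+1}`, i.e. `J + m_R^{c+1} = (z^c) + m_R^{c+1}`. -/
theorem coeff_ideal_order_gt_factorial_iff {𝕂 : Type*} [Field 𝕂] {n : ℕ}
    (J : Ideal (PowerSeries (MvPowerSeries (Fin n) 𝕂))) (c : ℕ) (hc1 : 1 ≤ c)
    (hc : idealOrd (IsLocalRing.maximalIdeal (PowerSeries (MvPowerSeries (Fin n) 𝕂))) J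
      = (c : ℕ∞)) :
    idealOrd (IsLocalRing.maximalIdeal (MvPowerSeries (Fin n) 𝕂)) (coeffIdeal J c)
        > (c.factorial : ℕ∞)
      ↔ J ⊔ (IsLocalRing.maximalIdeal (PowerSeries (MvPowerSeries (Fin n) 𝕂))) ^ (c + 1)
          = Ideal.span {(PowerSeries.X : PowerSeries (MvPowerSeries (Fin n) 𝕂)) ^ c}
            ⊔ (IsLocalRing.maximalIdeal (PowerSeries (MvPowerSeries (Fin n) 𝕂))) ^ (c + 1) :=
  coeff_ideal_order_gt_factorial_iff_general J c hc
end
end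

section
/- In the situation of the coordinate change u = z − q with q ∈ 𝕂[x₁,…,xₙ] a nonzero homogeneous polynomial of positive degree: for any index 1 ≤ i ≤ n, if c!·ord_{(x_i)} q ≥ ord_{(x_i)} K, then ord_{(x_i)} K₁ ≥ ord_{(x_i)} K. Here J ⊆ R = 𝕂[[z,x₁,…,xₙ]] is an ideal of order c with 1 ≤ c < ∞, K = coeff_{V(z)}(J), K₁ = coeff_{V(u)}(J), and ord_{(x_i)} denotes the order along the prime ideal (x_i) of Q = 𝕂[[x₁,…,xₙ]], i.e., ord_{(x_i)} A = sup{k : A ⊆ (x_i)^k}. -/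
set_option synthInstance.maxHeartbeats 400000
set_option maxHeartbeats 1000000

noncomputable section

/-- The coefficient ideal `K₁ = coeff_{V(u)}(J) = Σ_{i<c} (f̃_i : f ∈ J)^{c!/(c−i)}` of `J`
with respect to `V(u)`, computed from a function `E` assigning to each `f ∈ R` the family of
coefficients of its `u`-expansion. -/
def coeffIdealE {𝕂 : Type*} [Field 𝕂] {n : ℕ}
    (E : PowerSeries (MvPowerSeries (Fin n) 𝕂) → ℕ → MvPowerSeries (Fin n) 𝕂)
    (J : Ideal (PowerSeries (MvPowerSeries (Fin n) 𝕂))) (c : ℕ) :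
    Ideal (MvPowerSeries (Fin n) 𝕂) :=
  ∑ i ∈ Finset.range c, (Ideal.span ((fun f => E f i) '' J)) ^ (c.factorial / (c - i))

/-- An element `f = Σ_{i≥0} f_i z^i` of `R = Q[[z]]` is `z`-regular of order `c` if
`f_i(0) = 0` for all `i < c` and `f_c(0) ≠ 0`. -/
def zRegular {𝕂 : Type*} [Field 𝕂] {n : ℕ}
    (f : PowerSeries (MvPowerSeries (Fin n) 𝕂)) (c : ℕ) : Prop :=
  (∀ i < c, MvPowerSeries.constantCoeff (σ := Fin n) (R := 𝕂)
      (PowerSeries.coeff (R := MvPowerSeries (Fin n) 𝕂) i f) = 0) ∧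
    MvPowerSeries.constantCoeff (σ := Fin n) (R := 𝕂)
      (PowerSeries.coeff (R := MvPowerSeries (Fin n) 𝕂) c f) ≠ 0

/-!
Write `I = (x_i)`, `b = ⌈k / c!⌉` and `t j = ⌈k / (c!/(c-j))⌉`, so that `K ⊆ I^k` says exactly
that `f_j ∈ I^{t j}` for `f ∈ J` and `j < c` (because `x_i` is prime, `g^e ∈ I^k ↔ g ∈ I^⌈k/e⌉`),
and similarly for `K₁` with the `u`-coefficients. The hypothesis on `q` gives `q ∈ I^b`, and the
weights satisfy `t j ≤ t (j+1) + b`, with `t j = 0` for `j ≥ c`. Since `z = u + q`, dividing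
`f - Σ_{j<s} f̃_j u^j` by `u` one step at a time is a triangular recursion
`coeff_j w = coeff_{j+1} g + q · coeff_{j+1} w` on the coefficients, which preserves these weighted
bounds; it terminates because the weights vanish from `c` on. Hence `f̃_s ∈ I^{t s}` as well.
-/

open scoped Nat

namespace ENat

theorem natCast_le_mul_iff_ceilDiv_le {k e : ℕ} (he : 0 < e) {m : ℕ∞} :
    (k : ℕ∞) ≤ e * m ↔ ((k ⌈/⌉ e : ℕ) : ℕ∞) ≤ m := by
  cases m with
  | top => simp [ENat.mul_top (Nat.cast_ne_zero.mpr he.ne')]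
  | coe m => norm_cast; exact (ceilDiv_le_iff_le_mul he).symm

theorem natCast_le_sSup_image_iff {S : Set ℕ} (hS0 : 0 ∈ S)
    (hS : ∀ ⦃m n⦄, m ≤ n → n ∈ S → m ∈ S) {n : ℕ} :
    (n : ℕ∞) ≤ sSup ((↑) '' S) ↔ n ∈ S := by
  refine ⟨fun h => ?_, fun h => le_sSup ⟨n, h, rfl⟩⟩
  cases n with
  | zero => exact hS0
  | succ n =>
    push_cast at h
    obtain ⟨_, ⟨m, hm, rfl⟩, hnm⟩ :=
      lt_sSup_iff.mp ((ENat.add_one_le_iff (ENat.natCast_ne_top n)).mp h)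
    exact hS (Nat.cast_lt.mp hnm) hm

end ENat

theorem natCast_le_elemOrd_iff {A : Type*} [CommRing A] {I : Ideal A} {g : A} {n : ℕ} :
    (n : ℕ∞) ≤ elemOrd I g ↔ g ∈ I ^ n :=
  ENat.natCast_le_sSup_image_iff (show g ∈ I ^ 0 by simp) fun _ _ hmn hn =>
    Ideal.pow_le_pow_right hmn hn

theorem natCast_le_idealOrd_iff {A : Type*} [CommRing A] {I J : Ideal A} {n : ℕ} :
    (n : ℕ∞) ≤ idealOrd I J ↔ J ≤ I ^ n :=
  ENat.natCast_le_sSup_image_iff (by simp) fun _ _ hmn hn => hn.trans (Ideal.pow_le_pow_right hmn)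

theorem Nat.factorial_div_sub_pos {c j : ℕ} (hj : j < c) : 0 < c ! / (c - j) :=
  Nat.div_pos ((Nat.sub_le c j).trans (Nat.self_le_factorial c)) (Nat.sub_pos_of_lt hj)

theorem Nat.ceilDiv_factorial_div_sub_le {c k b : ℕ} (hk : k ≤ c ! * b) (j : ℕ) :
    k ⌈/⌉ (c ! / (c - j)) ≤ k ⌈/⌉ (c ! / (c - (j + 1))) + b := by
  rcases le_or_gt c j with hj | hj
  · simp [Nat.sub_eq_zero_of_le hj]
  rw [ceilDiv_le_iff_le_mul (Nat.factorial_div_sub_pos hj)]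
  rcases (j + 1).lt_or_ge c with hj₁ | hj₁
  swap
  · simpa [show c - j = 1 by omega, Nat.sub_eq_zero_of_le hj₁] using hk
  set e₀ := c ! / (c - j)
  set e₁ := c ! / (c - (j + 1))
  have he₀ : e₀ * (c - j) = c ! := Nat.div_mul_cancel (Nat.dvd_factorial (by omega) (by omega))
  have he₁ : e₁ * (c - (j + 1)) = c ! :=
    Nat.div_mul_cancel (Nat.dvd_factorial (by omega) (by omega))
  have hk₁ : k ≤ e₁ * (k ⌈/⌉ e₁) := le_smul_ceilDiv (Nat.factorial_div_sub_pos hj₁)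
  refine Nat.le_of_mul_le_mul_right ?_ (Nat.sub_pos_of_lt hj)
  calc k * (c - j) = k * (c - (j + 1)) + k := by rw [show c - j = c - (j + 1) + 1 by omega]; ring
    _ ≤ e₁ * (k ⌈/⌉ e₁) * (c - (j + 1)) + c ! * b := by gcongr
    _ = e₀ * (k ⌈/⌉ e₁ + b) * (c - j) := by rw [mul_right_comm, he₁, mul_right_comm, he₀]; ring

theorem Prime.pow_dvd_pow_iff_pow_ceilDiv_dvd {A : Type*} [CommMonoidWithZero A]
    [IsCancelMulZero A] {π x : A} (hπ : Prime π) {e k : ℕ} (he : 0 < e) :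
    π ^ k ∣ x ^ e ↔ π ^ (k ⌈/⌉ e) ∣ x := by
  rw [pow_dvd_iff_le_emultiplicity, pow_dvd_iff_le_emultiplicity, emultiplicity_pow hπ]
  exact ENat.natCast_le_mul_iff_ceilDiv_le he

section PrimeIdeal

open Ideal

variable {A : Type*} [CommRing A] [IsDomain A] {π : A}

theorem Prime.pow_mem_span_singleton_pow_iff (hπ : Prime π) {x : A} {e k : ℕ} (he : 0 < e) :
    x ^ e ∈ span {π} ^ k ↔ x ∈ span {π} ^ (k ⌈/⌉ e) := by
  simp only [span_singleton_pow, mem_span_singleton, hπ.pow_dvd_pow_iff_pow_ceilDiv_dvd he]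

theorem Prime.span_pow_le_span_singleton_pow_iff (hπ : Prime π) {S : Set A} {e k : ℕ}
    (he : 0 < e) : span S ^ e ≤ span {π} ^ k ↔ ∀ x ∈ S, x ∈ span {π} ^ (k ⌈/⌉ e) := by
  refine ⟨fun h x hx => (hπ.pow_mem_span_singleton_pow_iff he).mp
    (h (pow_mem_pow (subset_span hx) e)), fun h => ?_⟩
  calc span S ^ e ≤ (span {π} ^ (k ⌈/⌉ e)) ^ e := pow_right_mono (span_le.mpr h) e
    _ = span {π} ^ (e • (k ⌈/⌉ e)) := by rw [← pow_mul, smul_eq_mul, mul_comm]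
    _ ≤ span {π} ^ k := pow_le_pow_right (le_smul_ceilDiv he)

theorem Prime.sum_span_pow_le_span_singleton_pow_iff (hπ : Prime π) {S : ℕ → Set A}
    {e : ℕ → ℕ} {c k : ℕ} (he : ∀ j < c, 0 < e j) :
    ∑ j ∈ Finset.range c, span (S j) ^ e j ≤ span {π} ^ k ↔
      ∀ j < c, ∀ x ∈ S j, x ∈ span {π} ^ (k ⌈/⌉ e j) := by
  simp only [sum_eq_sup, Finset.sup_le_iff, Finset.mem_range]
  exact forall₂_congr fun j hj => hπ.span_pow_le_span_singleton_pow_iff (he j hj)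

end PrimeIdeal

theorem eq_add_mul_of_sub_sum_eq_pow_mul {R : Type*} [CommRing R] [IsDomain R] {u f h h' : R}
    {a : ℕ → R} {s : ℕ} (hu : u ≠ 0) (hs : f - ∑ i ∈ Finset.range s, a i * u ^ i = u ^ s * h)
    (hs' : f - ∑ i ∈ Finset.range (s + 1), a i * u ^ i = u ^ (s + 1) * h') :
    h = a s + u * h' := by
  rw [Finset.sum_range_succ] at hs'
  exact mul_left_cancel₀ (pow_ne_zero s hu) (by linear_combination hs' - hs)

namespace PowerSeries

variable {A : Type*} [CommRing A] {I : Ideal A} {q : A} {b c : ℕ} {t : ℕ → ℕ}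

theorem X_sub_C_ne_zero [Nontrivial A] (q : A) : (X - C q : A⟦X⟧) ≠ 0 := fun h => by
  simpa using congrArg (coeff 1) h

theorem coeff_mem_of_eq_X_sub_C_mul (hq : q ∈ I ^ b) (ht : ∀ j, t j ≤ t (j + 1) + b)
    (htc : ∀ j, c ≤ j → t j = 0) {g w : A⟦X⟧} (hgw : g = (X - C q) * w)
    (hg : ∀ j, coeff (j + 1) g ∈ I ^ t j) (j : ℕ) : coeff j w ∈ I ^ t j := by
  have hrec : ∀ j, coeff j w = coeff (j + 1) g + q * coeff (j + 1) w := fun j => by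
    simp [hgw, sub_mul, coeff_succ_X_mul, coeff_C_mul]
  suffices ∀ m j, c ≤ j + m → coeff j w ∈ I ^ t j from this c j (Nat.le_add_left c j)
  intro m
  induction m with
  | zero => intro j hj; simp [htc j hj]
  | succ m ih =>
    intro j hj
    rw [hrec]
    refine add_mem (hg j) (Ideal.pow_le_pow_right (ht j) ?_)
    rw [add_comm, pow_add]
    exact Ideal.mul_mem_mul hq (ih (j + 1) (by omega))

theorem mem_pow_and_coeff_mem_of_eq_C_add_X_sub_C_mul (hq : q ∈ I ^ b)
    (ht : ∀ j, t j ≤ t (j + 1) + b) (htc : ∀ j, c ≤ j → t j = 0) {h w : A⟦X⟧} {a : A}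
    (hhw : h = C a + (X - C q) * w) (hh : ∀ j, coeff j h ∈ I ^ t j) :
    a ∈ I ^ t 0 ∧ ∀ j, coeff j w ∈ I ^ t (j + 1) := by
  have hw : ∀ j, coeff j w ∈ I ^ t (j + 1) :=
    coeff_mem_of_eq_X_sub_C_mul (c := c) hq (fun j => ht (j + 1))
      (fun j hj => htc (j + 1) (by omega)) (eq_sub_of_add_eq' hhw.symm).symm
      (by simpa using fun j => hh (j + 1))
  refine ⟨?_, hw⟩
  have ha : a = coeff 0 h + q * coeff 0 w := by simp [hhw, sub_mul]
  rw [ha]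
  refine add_mem (hh 0) (Ideal.pow_le_pow_right (ht 0) ?_)
  rw [add_comm, pow_add]
  exact Ideal.mul_mem_mul hq (hw 0)

theorem mem_pow_of_sub_sum_mem_span_X_sub_C_pow [IsDomain A] (hq : q ∈ I ^ b)
    (ht : ∀ j, t j ≤ t (j + 1) + b) (htc : ∀ j, c ≤ j → t j = 0) {f : A⟦X⟧} {E : ℕ → A}
    (hE : ∀ N, f - ∑ i ∈ Finset.range N, C (E i) * (X - C q) ^ i ∈ Ideal.span {(X - C q) ^ N})
    (hf : ∀ j, coeff j f ∈ I ^ t j) (s : ℕ) : E s ∈ I ^ t s := by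
  choose r hr using fun N => Ideal.mem_span_singleton.mp (hE N)
  have hstep : ∀ s, r s = C (E s) + (X - C q) * r (s + 1) := fun s =>
    eq_add_mul_of_sub_sum_eq_pow_mul (X_sub_C_ne_zero q) (hr s) (hr (s + 1))
  have hshift : ∀ s, (∀ j, coeff j (r s) ∈ I ^ t (s + j)) →
      E s ∈ I ^ t s ∧ ∀ j, coeff j (r (s + 1)) ∈ I ^ t (s + 1 + j) := fun s hs => by
    simpa only [add_zero, add_assoc, add_comm 1] using
      mem_pow_and_coeff_mem_of_eq_C_add_X_sub_C_mul (c := c) (t := fun j => t (s + j)) hq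
        (fun j => ht (s + j)) (fun j hj => htc (s + j) (by omega)) (hstep s) hs
  have hr_mem : ∀ s j, coeff j (r s) ∈ I ^ t (s + j) := by
    intro s
    induction s with
    | zero =>
      have hr0 : r 0 = f := by simpa using (hr 0).symm
      simpa [hr0] using hf
    | succ s ih => exact (hshift s ih).2
  exact (hshift s (hr_mem s)).1

end PowerSeries

namespace MvPowerSeries

variable {σ R : Type*}

instance [CommRing R] [IsDomain R] : IsDomain (MvPowerSeries σ R) :=
  NoZeroDivisors.to_isDomain _

theorem X_pow_dvd_iff_le_weightedOrder [Semiring R] [DecidableEq σ] {s : σ} {n : ℕ}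
    {f : MvPowerSeries σ R} : X s ^ n ∣ f ↔ (n : ℕ∞) ≤ f.weightedOrder (Pi.single s 1) := by
  simp only [X_pow_dvd_iff]
  refine ⟨fun h => le_weightedOrder _ fun d hd => h d ?_,
    fun h d hd => coeff_eq_zero_of_lt_weightedOrder _ (lt_of_lt_of_le ?_ h)⟩
  all_goals simpa [Finsupp.weight_single_one_apply] using hd

theorem X_prime [CommSemiring R] [NoZeroDivisors R] [Nontrivial R] (s : σ) :
    Prime (X s : MvPowerSeries σ R) := by
  classical
  have hdvd : ∀ f : MvPowerSeries σ R, X s ∣ f ↔ f.weightedOrder (Pi.single s 1) ≠ 0 := fun f => by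
    rw [← pow_one (X s), X_pow_dvd_iff_le_weightedOrder, Nat.cast_one, Order.one_le_iff_ne_zero]
  refine ⟨fun h => by simpa using congrArg (coeff (Finsupp.single s 1)) h, fun hu => ?_,
    fun f g hfg => ?_⟩
  · simpa [weightedOrder_one] using (hdvd 1).mp hu.dvd
  · simpa only [hdvd, weightedOrder_mul, ne_eq, add_eq_zero, not_and_or] using hfg

end MvPowerSeries

section CoefficientIdeal

variable {𝕂 : Type*} [Field 𝕂] {n : ℕ} {π : MvPowerSeries (Fin n) 𝕂}
  {J : Ideal (PowerSeries (MvPowerSeries (Fin n) 𝕂))} {c k : ℕ}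

theorem coeffIdeal_le_span_singleton_pow_iff (hπ : Prime π) :
    coeffIdeal J c ≤ Ideal.span {π} ^ k ↔
      ∀ j < c, ∀ f ∈ J, PowerSeries.coeff j f ∈ Ideal.span {π} ^ (k ⌈/⌉ (c ! / (c - j))) := by
  simp only [coeffIdeal, hπ.sum_span_pow_le_span_singleton_pow_iff
    (fun _ => Nat.factorial_div_sub_pos), Set.forall_mem_image, SetLike.mem_coe]

theorem coeffIdealE_le_span_singleton_pow_iff (hπ : Prime π)
    {E : PowerSeries (MvPowerSeries (Fin n) 𝕂) → ℕ → MvPowerSeries (Fin n) 𝕂} :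
    coeffIdealE E J c ≤ Ideal.span {π} ^ k ↔
      ∀ j < c, ∀ f ∈ J, E f j ∈ Ideal.span {π} ^ (k ⌈/⌉ (c ! / (c - j))) := by
  simp only [coeffIdealE, hπ.sum_span_pow_le_span_singleton_pow_iff
    (fun _ => Nat.factorial_div_sub_pos), Set.forall_mem_image, SetLike.mem_coe]

end CoefficientIdeal

theorem order_along_xi_after_translation_general {𝕂 : Type*} [Field 𝕂] {n : ℕ}
    (q : MvPolynomial (Fin n) 𝕂)
    (u : PowerSeries (MvPowerSeries (Fin n) 𝕂))
    (hu : u = PowerSeries.X -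
      PowerSeries.C (R := MvPowerSeries (Fin n) 𝕂) (↑q : MvPowerSeries (Fin n) 𝕂))
    (J : Ideal (PowerSeries (MvPowerSeries (Fin n) 𝕂))) (c : ℕ)
    (E : PowerSeries (MvPowerSeries (Fin n) 𝕂) → ℕ → MvPowerSeries (Fin n) 𝕂)
    (hE : ∀ f : PowerSeries (MvPowerSeries (Fin n) 𝕂), ∀ N : ℕ,
      f - ∑ i ∈ Finset.range N, PowerSeries.C (R := MvPowerSeries (Fin n) 𝕂) (E f i) * u ^ i
        ∈ Ideal.span {u ^ N})
    (i : Fin n)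
    (hord : (c.factorial : ℕ∞) *
        elemOrd (Ideal.span {(MvPowerSeries.X i : MvPowerSeries (Fin n) 𝕂)})
          (↑q : MvPowerSeries (Fin n) 𝕂)
      ≥ idealOrd (Ideal.span {(MvPowerSeries.X i : MvPowerSeries (Fin n) 𝕂)})
          (coeffIdeal J c)) :
    idealOrd (Ideal.span {(MvPowerSeries.X i : MvPowerSeries (Fin n) 𝕂)}) (coeffIdealE E J c)
      ≥ idealOrd (Ideal.span {(MvPowerSeries.X i : MvPowerSeries (Fin n) 𝕂)})
          (coeffIdeal J c) := by
  subst hu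
  have hX : Prime (MvPowerSeries.X i : MvPowerSeries (Fin n) 𝕂) := MvPowerSeries.X_prime i
  refine ENat.forall_natCast_le_iff_le.mp fun k hk => ?_
  have hq : (q : MvPowerSeries (Fin n) 𝕂) ∈ Ideal.span {MvPowerSeries.X i} ^ (k ⌈/⌉ c !) := by
    rw [← natCast_le_elemOrd_iff, ← ENat.natCast_le_mul_iff_ceilDiv_le c.factorial_pos]
    exact hk.trans hord
  rw [natCast_le_idealOrd_iff, coeffIdeal_le_span_singleton_pow_iff hX] at hk
  rw [natCast_le_idealOrd_iff, coeffIdealE_le_span_singleton_pow_iff hX]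
  intro s _ f hf
  -- `c ! / (c - j) = 0` for `j ≥ c`, so there the weight is `k ⌈/⌉ 0 = 0`.
  have htc : ∀ j, c ≤ j → k ⌈/⌉ (c ! / (c - j)) = 0 := fun j hj => by
    simp [Nat.sub_eq_zero_of_le hj]
  refine PowerSeries.mem_pow_of_sub_sum_mem_span_X_sub_C_pow hq
    (Nat.ceilDiv_factorial_div_sub_le (le_smul_ceilDiv c.factorial_pos)) htc (hE f)
    (fun j => ?_) s
  rcases lt_or_ge j c with hj | hj
  · exact hk j hj f hf
  · simp [htc j hj]

/-- Coordinate change `u = z − q`, `q` a nonzero homogeneous polynomial of positive degree: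
for any index `i`, if `c!·ord_{(x_i)} q ≥ ord_{(x_i)} K`, then
`ord_{(x_i)} K₁ ≥ ord_{(x_i)} K`, where `K = coeff_{V(z)}(J)`, `K₁ = coeff_{V(u)}(J)` and
`ord_{(x_i)}` is the order along the prime ideal `(x_i)`. -/
theorem order_along_xi_after_translation {𝕂 : Type*} [Field 𝕂] (p : ℕ)
    (hp : p.Prime) [CharP 𝕂 p] {n : ℕ}
    (q : MvPolynomial (Fin n) 𝕂) (d : ℕ) (hq0 : q ≠ 0) (hqd : q.IsHomogeneous d) (hd : 1 ≤ d)
    (u : PowerSeries (MvPowerSeries (Fin n) 𝕂))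
    (hu : u = PowerSeries.X -
      PowerSeries.C (R := MvPowerSeries (Fin n) 𝕂) (↑q : MvPowerSeries (Fin n) 𝕂))
    (J : Ideal (PowerSeries (MvPowerSeries (Fin n) 𝕂))) (c : ℕ) (hc1 : 1 ≤ c)
    (hc : idealOrd (IsLocalRing.maximalIdeal (PowerSeries (MvPowerSeries (Fin n) 𝕂))) J
      = (c : ℕ∞))
    (E : PowerSeries (MvPowerSeries (Fin n) 𝕂) → ℕ → MvPowerSeries (Fin n) 𝕂)
    (hE : ∀ f : PowerSeries (MvPowerSeries (Fin n) 𝕂), ∀ N : ℕ,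
      f - ∑ i ∈ Finset.range N, PowerSeries.C (R := MvPowerSeries (Fin n) 𝕂) (E f i) * u ^ i
        ∈ Ideal.span {u ^ N})
    (i : Fin n)
    (hord : (c.factorial : ℕ∞) *
        elemOrd (Ideal.span {(MvPowerSeries.X i : MvPowerSeries (Fin n) 𝕂)})
          (↑q : MvPowerSeries (Fin n) 𝕂)
      ≥ idealOrd (Ideal.span {(MvPowerSeries.X i : MvPowerSeries (Fin n) 𝕂)})
          (coeffIdeal J c)) :
    idealOrd (Ideal.span {(MvPowerSeries.X i : MvPowerSeries (Fin n) 𝕂)}) (coeffIdealE E J c)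
      ≥ idealOrd (Ideal.span {(MvPowerSeries.X i : MvPowerSeries (Fin n) 𝕂)})
          (coeffIdeal J c) :=
  order_along_xi_after_translation_general q u hu J c E hE i hord
end
end

section
/- Let p be a prime number, e ≥ 1 an integer, and c a positive multiple of p^e. Then for every integer i with c − p^e < i < c, the binomial coefficient binom(c, i) is divisible by p. -/
/-! By Lucas' theorem `binom(n, k) ≡ binom(n % p, k % p) * binom(n / p, k / p) (mod p)`, and the
first factor vanishes when `p ∣ n` but `p ∤ k`. Dividing out the exact power `p ^ v` of `p` in
`k` (which leaves `binom(n, k)` unchanged mod `p`) reduces `p ^ e ∣ n`, `p ^ e ∤ k` to that case.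
An `i` strictly between the consecutive multiples `c - p ^ e` and `c` of `p ^ e` is not one. -/

namespace Nat.Prime

variable {p n k : ℕ}

theorem dvd_choose_of_dvd_of_not_dvd (hp : p.Prime) (hn : p ∣ n) (hk : ¬p ∣ k) :
    p ∣ n.choose k := by
  have := Fact.mk hp
  have hlt : n % p < k % p := by
    rw [Nat.mod_eq_zero_of_dvd hn]
    exact Nat.pos_of_ne_zero fun h => hk (Nat.dvd_of_mod_eq_zero h)
  apply Nat.modEq_zero_iff_dvd.mp
  calc n.choose k ≡ (n % p).choose (k % p) * (n / p).choose (k / p) [MOD p] :=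
        Choose.choose_modEq_choose_mod_mul_choose_div_nat
    _ = 0 := by rw [Nat.choose_eq_zero_of_lt hlt, zero_mul]

theorem dvd_choose_of_pow_dvd_of_not_pow_dvd {e : ℕ} (hp : p.Prime) (hn : p ^ e ∣ n)
    (hk : ¬p ^ e ∣ k) : p ∣ n.choose k := by
  have := Fact.mk hp
  have hk0 : k ≠ 0 := by rintro rfl; exact hk (dvd_zero _)
  obtain ⟨v, k', hk', rfl⟩ := Nat.exists_eq_pow_mul_and_not_dvd hk0 p hp.ne_one
  have hve : v < e := lt_of_not_ge fun hev => hk (Dvd.dvd.mul_right (Nat.pow_dvd_pow p hev) _)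
  obtain ⟨n', rfl⟩ : p ^ v ∣ n := (Nat.pow_dvd_pow p hve.le).trans hn
  have hn' : p ∣ n' := by
    rw [← Nat.mul_dvd_mul_iff_left (pow_pos hp.pos v), ← pow_succ]
    exact (Nat.pow_dvd_pow p hve).trans hn
  exact (Choose.choose_pow_mul_pow_mul_modEq_choose_nat.dvd_iff dvd_rfl).mpr
    (dvd_choose_of_dvd_of_not_dvd hp hn' hk')

end Nat.Prime

theorem prime_dvd_choose_of_lt_general (p : ℕ) (hp : p.Prime) (e : ℕ)
    (c : ℕ) (hc : p ^ e ∣ c) (i : ℕ) (hi1 : c - p ^ e < i) (hi2 : i < c) :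
    p ∣ Nat.choose c i := by
  refine hp.dvd_choose_of_pow_dvd_of_not_pow_dvd hc fun hi => ?_
  have hle : p ^ e ≤ c - i := Nat.le_of_dvd (Nat.sub_pos_of_lt hi2) (Nat.dvd_sub hc hi)
  omega

/-- Let `p` be prime, `e ≥ 1`, and `c` a positive multiple of `p^e`.  Then for every `i` with
`c − p^e < i < c`, the binomial coefficient `binom(c, i)` is divisible by `p`. -/
theorem prime_dvd_choose_of_lt (p : ℕ) (hp : p.Prime) (e : ℕ) (he : 1 ≤ e)
    (c : ℕ) (hc0 : 0 < c) (hc : p ^ e ∣ c) (i : ℕ) (hi1 : c - p ^ e < i) (hi2 : i < c) :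
    p ∣ Nat.choose c i :=
  prime_dvd_choose_of_lt_general p hp e c hc i hi1 hi2
end

section
/- Let 𝕂 be a field, n ≥ 1, and S ⊆ {1,…,n} a subset with 1 ∈ S. Let π : 𝕂[[y₁,…,yₙ]] → 𝕂[[x₁,…,xₙ]] be the continuous 𝕂-algebra homomorphism determined by the substitution y₁ ↦ x₁, y_i ↦ x₁·x_i for i ∈ S\{1}, and y_i ↦ x_i for i ∉ S. Then for every nonzero h = Σ_{α∈ℕⁿ} c_α y^α in 𝕂[[y₁,…,yₙ]], the order of π(h) equals the minimum over all multi-indices α with c_α ≠ 0 of |α|_S + Σ_{i=2}^{n} α_i, where |α|_S = Σ_{i∈S} α_i. -/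
noncomputable section

/-- The order of a multivariate power series: the smallest total degree of a monomial
appearing with nonzero coefficient (`⊤` for the zero series). -/
def mvOrder {𝕂 : Type*} [Field 𝕂] {n : ℕ} (g : MvPowerSeries (Fin n) 𝕂) : ℕ∞ :=
  ⨅ (m : Fin n →₀ ℕ) (_ : MvPowerSeries.coeff m g ≠ 0), (m.degree : ℕ∞)

/-- The continuous `𝕂`-algebra homomorphism `π : 𝕂[[y₁,…,yₙ]] → 𝕂[[x₁,…,xₙ]]` determined by
the substitution `y₁ ↦ x₁`, `y_i ↦ x₁·x_i` for `i ∈ S\{1}` and `y_i ↦ x_i` for `i ∉ S`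
(the variables are indexed by `Fin n`, with `0` playing the role of the index `1`),
described coefficientwise: since `π(y^α) = x₁^{|α|_S}·Π_{i≥2} x_i^{α_i}`, the monomial
`x^β` occurs in `π(y^α)` for a unique `α` (namely `α_i = β_i` for `i ≠ 1` and
`α₁ = β₁ − Σ_{i∈S\{1}} β_i`, provided this difference is non-negative). -/
def piMap {𝕂 : Type*} [Field 𝕂] {n : ℕ} [NeZero n] (S : Finset (Fin n))
    (h : MvPowerSeries (Fin n) 𝕂) : MvPowerSeries (Fin n) 𝕂 :=
  fun β => if (∑ i ∈ S.erase 0, β i) ≤ β 0 then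
      MvPowerSeries.coeff (Finsupp.update β 0 (β 0 - ∑ i ∈ S.erase 0, β i)) h
    else 0

/-!
Since `π(y^α) = x^{e(α)}` with `e(α) = α + (Σ_{i∈S\{1}} α_i)·e₁` (this is `piExponent`), and
`e` is injective with image exactly the exponents `β` satisfying `Σ_{i∈S\{1}} β_i ≤ β₁`, the
series `π(h)` is `h` with its coefficients moved along `e`. Hence the order of `π(h)` is the
minimum of `|e(α)|` over the support of `h`, and `|e(α)| = |α|_S + Σ_{i≥2} α_i` as `1 ∈ S`.
-/

open Finset MvPowerSeries

lemma mvOrder_eq_iInf_degree_of_coeff_comp {𝕂 : Type*} [Field 𝕂] {n : ℕ}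
    {g h : MvPowerSeries (Fin n) 𝕂} (e : (Fin n →₀ ℕ) → Fin n →₀ ℕ)
    (hcoeff : ∀ α, coeff (e α) g = coeff α h)
    (hsupport : ∀ β, coeff β g ≠ 0 → ∃ α, e α = β) :
    mvOrder g = ⨅ (α : Fin n →₀ ℕ) (_ : coeff α h ≠ 0), ((e α).degree : ℕ∞) := by
  refine le_antisymm (le_iInf₂ fun α hα => ?_) (le_iInf₂ fun β hβ => ?_)
  · exact iInf₂_le_of_le (e α) (by rwa [hcoeff]) le_rfl
  · obtain ⟨α, rfl⟩ := hsupport β hβ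
    exact iInf₂_le_of_le α (by rwa [← hcoeff]) le_rfl

section piExponent

variable {n : ℕ} [NeZero n] (S : Finset (Fin n))

def piExponent (α : Fin n →₀ ℕ) : Fin n →₀ ℕ :=
  α + Finsupp.single 0 (∑ i ∈ S.erase 0, α i)

lemma piExponent_apply_zero (α : Fin n →₀ ℕ) :
    piExponent S α 0 = α 0 + ∑ i ∈ S.erase 0, α i := by
  simp [piExponent]

lemma piExponent_apply_of_ne_zero (α : Fin n →₀ ℕ) {i : Fin n} (hi : i ≠ 0) :
    piExponent S α i = α i := by
  simp [piExponent, Ne.symm hi]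

lemma sum_erase_zero_piExponent (α : Fin n →₀ ℕ) :
    ∑ i ∈ S.erase 0, piExponent S α i = ∑ i ∈ S.erase 0, α i :=
  sum_congr rfl fun _ hi => piExponent_apply_of_ne_zero S α (ne_of_mem_erase hi)

lemma degree_piExponent {S : Finset (Fin n)} (hS : (0 : Fin n) ∈ S) (α : Fin n →₀ ℕ) :
    (piExponent S α).degree = ∑ i ∈ S, α i + ∑ i ∈ univ.erase (0 : Fin n), α i := by
  rw [piExponent, map_add, Finsupp.degree_single, Finsupp.degree_eq_sum,
    ← add_sum_erase _ _ (mem_univ 0), ← add_sum_erase _ _ hS]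
  ring

lemma coeff_piMap_piExponent {𝕂 : Type*} [Field 𝕂] (h : MvPowerSeries (Fin n) 𝕂)
    (α : Fin n →₀ ℕ) : coeff (piExponent S α) (piMap S h) = coeff α h := by
  change piMap S h (piExponent S α) = _
  rw [piMap, sum_erase_zero_piExponent, piExponent_apply_zero, if_pos (Nat.le_add_left _ _),
    Nat.add_sub_cancel]
  congr 2
  ext i
  rcases eq_or_ne i 0 with rfl | hi
  · simp
  · rw [Finsupp.update_apply, if_neg hi, piExponent_apply_of_ne_zero S α hi]

lemma exists_piExponent_eq {β : Fin n →₀ ℕ} (hβ : ∑ i ∈ S.erase 0, β i ≤ β 0) :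
    ∃ α, piExponent S α = β := by
  refine ⟨β.update 0 (β 0 - ∑ i ∈ S.erase 0, β i), ?_⟩
  have hsum : ∑ i ∈ S.erase 0, β.update 0 (β 0 - ∑ i ∈ S.erase 0, β i) i
      = ∑ i ∈ S.erase 0, β i :=
    sum_congr rfl fun i hi => by simp [Finsupp.update_apply, ne_of_mem_erase hi]
  ext i
  rcases eq_or_ne i 0 with rfl | hi
  · rw [piExponent_apply_zero, hsum, Finsupp.update_apply, if_pos rfl]
    omega
  · rw [piExponent_apply_of_ne_zero S _ hi, Finsupp.update_apply, if_neg hi]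

lemma exists_piExponent_eq_of_coeff_piMap_ne_zero {𝕂 : Type*} [Field 𝕂]
    {h : MvPowerSeries (Fin n) 𝕂} {β : Fin n →₀ ℕ} (hβ : coeff β (piMap S h) ≠ 0) :
    ∃ α, piExponent S α = β := by
  change piMap S h β ≠ 0 at hβ
  rw [piMap] at hβ
  exact exists_piExponent_eq S (of_not_not fun hle => hβ (if_neg hle))

end piExponent

theorem order_of_monomial_substitution_general {𝕂 : Type*} [Field 𝕂] {n : ℕ} [NeZero n]
    (S : Finset (Fin n)) (hS : (0 : Fin n) ∈ S)
    (h : MvPowerSeries (Fin n) 𝕂) :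
    mvOrder (piMap S h)
      = ⨅ (α : Fin n →₀ ℕ) (_ : MvPowerSeries.coeff α h ≠ 0),
          (((∑ i ∈ S, α i) + ∑ i ∈ Finset.univ.erase (0 : Fin n), α i : ℕ) : ℕ∞) := by
  rw [mvOrder_eq_iInf_degree_of_coeff_comp (piExponent S) (coeff_piMap_piExponent S h)
    fun _ => exists_piExponent_eq_of_coeff_piMap_ne_zero S]
  simp only [degree_piExponent hS]

/-- Let `S ⊆ {1,…,n}` with `1 ∈ S` and let `π : 𝕂[[y₁,…,yₙ]] → 𝕂[[x₁,…,xₙ]]` be the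
substitution homomorphism `y₁ ↦ x₁`, `y_i ↦ x₁·x_i` for `i ∈ S\{1}`, `y_i ↦ x_i` for
`i ∉ S`.  Then for every nonzero `h = Σ_α c_α y^α`, the order of `π(h)` equals the minimum
over all `α` with `c_α ≠ 0` of `|α|_S + Σ_{i=2}^n α_i`, where `|α|_S = Σ_{i∈S} α_i`. -/
theorem order_of_monomial_substitution {𝕂 : Type*} [Field 𝕂] {n : ℕ} [NeZero n]
    (hn : 1 ≤ n) (S : Finset (Fin n)) (hS : (0 : Fin n) ∈ S)
    (h : MvPowerSeries (Fin n) 𝕂) (hh : h ≠ 0) :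
    mvOrder (piMap S h)
      = ⨅ (α : Fin n →₀ ℕ) (_ : MvPowerSeries.coeff α h ≠ 0),
          (((∑ i ∈ S, α i) + ∑ i ∈ Finset.univ.erase (0 : Fin n), α i : ℕ) : ℕ∞) :=
  order_of_monomial_substitution_general S hS h
end
end

section
/- Let 𝕂 be a field of characteristic p > 0, k ≥ 1 an integer, and P ∈ 𝕂[x₁,…,xₙ] a homogeneous polynomial of degree d with p^k dividing d. Let t₂,…,tₙ ∈ 𝕂. If the polynomial P(1, x₂+t₂, …, xₙ+tₙ) is a p^k-th power in the formal power series ring 𝕂[[x₂,…,xₙ]], then P is a p^k-th power in 𝕂[x₁,…,xₙ]. -/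
/-!
In characteristic `p`, the coefficients of `g ^ p ^ k` are the `p ^ k`-th powers of those of `g`,
moved to exponents multiplied by `p ^ k`; as `x ↦ x ^ p ^ k` is injective on a field, a power
series whose `p ^ k`-th power is a polynomial is itself a polynomial `h`. Undoing the translation,
`P(1, x₂, …, xₙ) = f ^ p ^ k` with `f = h(x₂ - t₂, …, xₙ - tₙ)`, so `f` has total degree at most
`e = d / p ^ k`. The homogenization `Q` of `f` in degree `e` then satisfies `P = Q ^ p ^ k`, since
both sides are homogeneous of degree `d` with the same dehomogenization.
-/

open MvPolynomial

namespace Finsupp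

variable {ι : Type*} [DecidableEq ι] {i₀ : ι}

theorem degree_eq_add_degree_subtypeDomain (a : ι →₀ ℕ) :
    a.degree = a i₀ + (a.subtypeDomain (· ≠ i₀)).degree := by
  rw [degree_apply, degree_apply, support_subtypeDomain]
  simp only [subtypeDomain_apply]
  rw [Finset.sum_subtype_eq_sum_filter (f := fun i => a i), Finset.filter_ne']
  by_cases h : i₀ ∈ a.support
  · exact (Finset.add_sum_erase _ _ h).symm
  · rw [notMem_support_iff.mp h, Finset.erase_eq_of_notMem h, zero_add]

theorem eq_of_degree_eq_of_subtypeDomain_eq {a b : ι →₀ ℕ} (h : a.degree = b.degree)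
    (h' : a.subtypeDomain (· ≠ i₀) = b.subtypeDomain (· ≠ i₀)) : a = b := by
  ext i
  by_cases hi : i = i₀
  · subst hi
    rw [degree_eq_add_degree_subtypeDomain (i₀ := i), h',
      degree_eq_add_degree_subtypeDomain (i₀ := i) b] at h
    exact Nat.add_right_cancel h
  · exact DFunLike.congr_fun h' ⟨i, hi⟩

theorem subtypeDomain_single_add_extendDomain (n : ℕ) (b : {j // j ≠ i₀} →₀ ℕ) :
    (single i₀ n + b.extendDomain).subtypeDomain (· ≠ i₀) = b := by
  ext j
  simp [Ne.symm j.2]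

theorem degree_single_add_extendDomain (n : ℕ) (b : {j // j ≠ i₀} →₀ ℕ) :
    (single i₀ n + b.extendDomain).degree = n + b.degree := by
  rw [degree_eq_add_degree_subtypeDomain (i₀ := i₀), subtypeDomain_single_add_extendDomain]
  simp

end Finsupp

namespace MvPowerSeries

variable {σ R : Type*}

theorem exists_coe_eq_of_support_subset [CommSemiring R] {g : MvPowerSeries σ R}
    (s : Finset (σ →₀ ℕ)) (hs : ∀ m, coeff m g ≠ 0 → m ∈ s) :
    ∃ h : MvPolynomial σ R, (h : MvPowerSeries σ R) = g := by
  classical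
  refine ⟨∑ m ∈ s, MvPolynomial.monomial m (coeff m g), ?_⟩
  ext m
  rw [MvPolynomial.coeff_coe, MvPolynomial.coeff_sum]
  simp only [MvPolynomial.coeff_monomial]
  rw [Finset.sum_ite_eq']
  split_ifs with hm
  · rfl
  · exact (not_not.mp (mt (hs m) hm)).symm

theorem exists_coe_eq_of_coe_eq_pow_expChar_pow [CommRing R] [IsReduced R] (p : ℕ)
    [ExpChar R p] (k : ℕ) {g : MvPowerSeries σ R} {F : MvPolynomial σ R}
    (hF : (F : MvPowerSeries σ R) = g ^ p ^ k) :
    ∃ h : MvPolynomial σ R, (h : MvPowerSeries σ R) = g := by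
  have hp := expChar_ne_zero R p
  have hq : p ^ k ≠ 0 := pow_ne_zero k hp
  have hcoeff (m : σ →₀ ℕ) : F.coeff (p ^ k • m) = iterateFrobenius R p k (coeff m g) := by
    rw [← MvPolynomial.coeff_coe, hF, ← map_iterateFrobenius_expand p hp, coeff_map,
      coeff_expand_smul]
  refine exists_coe_eq_of_support_subset
    (F.support.preimage (p ^ k • ·) (nsmul_right_injective hq).injOn) fun m hm => ?_
  rw [Finset.mem_preimage, MvPolynomial.mem_support_iff, hcoeff,
    ← map_zero (iterateFrobenius R p k)]
  exact (iterateFrobenius_inj R p k).ne hm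

end MvPowerSeries

namespace MvPolynomial

theorem totalDegree_pow_of_isDomain {σ R : Type*} [CommRing R] [IsDomain R]
    (f : MvPolynomial σ R) (n : ℕ) : (f ^ n).totalDegree = n * f.totalDegree := by
  rcases eq_or_ne f 0 with rfl | hf
  · cases n <;> simp
  induction n with
  | zero => simp
  | succ n ih => rw [pow_succ, totalDegree_mul_of_isDomain (pow_ne_zero _ hf) hf, ih, add_one_mul]

section Dehomogenize

variable {ι R : Type*} [DecidableEq ι] (i₀ : ι)

noncomputable def dehomogenize [CommSemiring R] :
    MvPolynomial ι R →ₐ[R] MvPolynomial {j // j ≠ i₀} R :=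
  aeval fun i => if h : i = i₀ then 1 else X ⟨i, h⟩

/-- `X i₀ ^ e * f (X / X i₀)`; junk (truncated subtraction) when `e < f.totalDegree`. -/
noncomputable def homogenize [CommSemiring R] (e : ℕ) (f : MvPolynomial {j // j ≠ i₀} R) :
    MvPolynomial ι R :=
  ∑ b ∈ f.support, monomial (Finsupp.single i₀ (e - b.degree) + b.extendDomain) (f.coeff b)

variable {i₀}

theorem dehomogenize_monomial [CommSemiring R] (a : ι →₀ ℕ) (c : R) :
    dehomogenize i₀ (monomial a c) = monomial (a.subtypeDomain (· ≠ i₀)) c := by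
  rw [dehomogenize, aeval_monomial, monomial_eq, algebraMap_eq, Finsupp.prod, Finsupp.prod,
    Finsupp.support_subtypeDomain,
    ← Finset.prod_filter_of_ne (p := (· ≠ i₀)) (by simp +contextual),
    ← Finset.prod_subtype_eq_prod_filter]
  exact congrArg _ (Finset.prod_congr rfl fun j _ => by rw [dif_neg j.2]; rfl)

theorem totalDegree_dehomogenize_le [CommSemiring R] (A : MvPolynomial ι R) :
    (dehomogenize i₀ A).totalDegree ≤ A.totalDegree := by
  conv_lhs => rw [A.as_sum, map_sum]
  refine totalDegree_finsetSum_le fun a ha => ?_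
  calc (dehomogenize i₀ (monomial a (A.coeff a))).totalDegree
      ≤ (a.subtypeDomain (· ≠ i₀)).degree := by
        rw [dehomogenize_monomial]; exact totalDegree_monomial_le _ _
    _ ≤ a.degree := (Finsupp.degree_eq_add_degree_subtypeDomain a).symm ▸ le_add_self
    _ ≤ A.totalDegree := le_totalDegree ha

theorem coeff_dehomogenize [CommSemiring R] {A : MvPolynomial ι R} {d : ℕ}
    (hA : A.IsHomogeneous d) {a : ι →₀ ℕ} (ha : a.degree = d) :
    (dehomogenize i₀ A).coeff (a.subtypeDomain (· ≠ i₀)) = A.coeff a := by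
  conv_lhs => rw [A.as_sum, map_sum]
  simp only [dehomogenize_monomial, coeff_sum, coeff_monomial]
  refine (Finset.sum_eq_single a (fun b hb hne => if_neg fun h => hne ?_)
    (fun h => by rw [if_pos rfl, notMem_support_iff.mp h])).trans (if_pos rfl)
  exact Finsupp.eq_of_degree_eq_of_subtypeDomain_eq
    (ha.trans (hA.degree_eq_sum_deg_support hb)).symm h

theorem IsHomogeneous.eq_of_dehomogenize_eq [CommSemiring R] {A B : MvPolynomial ι R} {d : ℕ}
    (hA : A.IsHomogeneous d) (hB : B.IsHomogeneous d)
    (h : dehomogenize i₀ A = dehomogenize i₀ B) : A = B := by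
  ext a
  by_cases ha : a.degree = d
  · rw [← coeff_dehomogenize hA ha, ← coeff_dehomogenize hB ha, h]
  · rw [hA.coeff_eq_zero ha, hB.coeff_eq_zero ha]

theorem dehomogenize_homogenize [CommSemiring R] (e : ℕ) (f : MvPolynomial {j // j ≠ i₀} R) :
    dehomogenize i₀ (homogenize i₀ e f) = f := by
  rw [homogenize, map_sum]
  conv_rhs => rw [f.as_sum]
  exact Finset.sum_congr rfl fun b _ => by
    rw [dehomogenize_monomial, Finsupp.subtypeDomain_single_add_extendDomain]

theorem isHomogeneous_homogenize [CommSemiring R] {e : ℕ} {f : MvPolynomial {j // j ≠ i₀} R}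
    (hf : f.totalDegree ≤ e) : (homogenize i₀ e f).IsHomogeneous e :=
  IsHomogeneous.sum _ _ _ fun b hb => isHomogeneous_monomial _ <| by
    rw [Finsupp.degree_single_add_extendDomain]
    exact Nat.sub_add_cancel ((le_totalDegree hb).trans hf)

theorem exists_eq_pow_of_dehomogenize_eq_pow [CommRing R] [IsDomain R] {q e : ℕ} (hq : q ≠ 0)
    {P : MvPolynomial ι R} (hP : P.IsHomogeneous (q * e)) {f : MvPolynomial {j // j ≠ i₀} R}
    (hf : dehomogenize i₀ P = f ^ q) : ∃ Q : MvPolynomial ι R, P = Q ^ q := by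
  have hfe : f.totalDegree ≤ e := by
    refine Nat.le_of_mul_le_mul_left ?_ (Nat.pos_of_ne_zero hq)
    calc q * f.totalDegree = (dehomogenize i₀ P).totalDegree := by
          rw [hf, totalDegree_pow_of_isDomain]
      _ ≤ P.totalDegree := totalDegree_dehomogenize_le P
      _ ≤ q * e := hP.totalDegree_le
  refine ⟨homogenize i₀ e f, hP.eq_of_dehomogenize_eq (i₀ := i₀) ?_ ?_⟩
  · exact mul_comm e q ▸ (isHomogeneous_homogenize hfe).pow q
  · rw [map_pow, dehomogenize_homogenize, hf]

theorem dehomogenize_eq_aeval_X_sub_C [CommRing R] (t : ι → R) (P : MvPolynomial ι R) :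
    dehomogenize i₀ P = aeval (fun j : {j // j ≠ i₀} => X j - C (t j))
      (aeval (fun i => if h : i = i₀ then 1 else X ⟨i, h⟩ + C (t i)) P) := by
  rw [← AlgHom.comp_apply, comp_aeval, dehomogenize]
  congr
  funext i
  split_ifs <;> simp

end Dehomogenize

end MvPolynomial

theorem pth_power_of_translate_pth_power_general {𝕂 : Type*} [Field 𝕂] (p : ℕ) (hp : p.Prime)
    [CharP 𝕂 p] {n : ℕ} [NeZero n] (k : ℕ) (t : Fin n → 𝕂)
    (P : MvPolynomial (Fin n) 𝕂) (d : ℕ) (hP : P.IsHomogeneous d) (hd : p ^ k ∣ d)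
    (hpow : ∃ g : MvPowerSeries {j : Fin n // j ≠ 0} 𝕂,
      ((MvPolynomial.aeval
          (fun i : Fin n => if h : i = 0 then 1
            else MvPolynomial.X (⟨i, h⟩ : {j : Fin n // j ≠ 0}) + MvPolynomial.C (t i)) P :
          MvPolynomial {j : Fin n // j ≠ 0} 𝕂) : MvPowerSeries {j : Fin n // j ≠ 0} 𝕂)
        = g ^ (p ^ k)) :
    ∃ Q : MvPolynomial (Fin n) 𝕂, P = Q ^ (p ^ k) := by
  obtain ⟨g, hg⟩ := hpow
  have : Fact p.Prime := ⟨hp⟩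
  obtain ⟨h, rfl⟩ := MvPowerSeries.exists_coe_eq_of_coe_eq_pow_expChar_pow p k hg
  rw [← coe_pow] at hg
  obtain ⟨e, rfl⟩ := hd
  refine exists_eq_pow_of_dehomogenize_eq_pow (pow_ne_zero k hp.ne_zero) hP
    (f := aeval (fun j : {j : Fin n // j ≠ 0} => X j - C (t j)) h) ?_
  rw [dehomogenize_eq_aeval_X_sub_C t, coe_injective _ _ hg, map_pow]

/-- Let `𝕂` have characteristic `p > 0`, `k ≥ 1`, and let `P ∈ 𝕂[x₁,…,xₙ]` be homogeneous of
degree `d` with `p^k ∣ d` (variables indexed by `Fin n`, the index `0` playing the role of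
`1`).  If the translated dehomogenization `P(1, x₂+t₂, …, xₙ+tₙ)` is a `p^k`-th power in the
formal power series ring `𝕂[[x₂,…,xₙ]]`, then `P` is a `p^k`-th power in `𝕂[x₁,…,xₙ]`. -/
theorem pth_power_of_translate_pth_power {𝕂 : Type*} [Field 𝕂] (p : ℕ) (hp : p.Prime)
    [CharP 𝕂 p] {n : ℕ} [NeZero n] (k : ℕ) (hk : 1 ≤ k) (t : Fin n → 𝕂)
    (P : MvPolynomial (Fin n) 𝕂) (d : ℕ) (hP : P.IsHomogeneous d) (hd : p ^ k ∣ d)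
    (hpow : ∃ g : MvPowerSeries {j : Fin n // j ≠ 0} 𝕂,
      ((MvPolynomial.aeval
          (fun i : Fin n => if h : i = 0 then 1
            else MvPolynomial.X (⟨i, h⟩ : {j : Fin n // j ≠ 0}) + MvPolynomial.C (t i)) P :
          MvPolynomial {j : Fin n // j ≠ 0} 𝕂) : MvPowerSeries {j : Fin n // j ≠ 0} 𝕂)
        = g ^ (p ^ k)) :
    ∃ Q : MvPolynomial (Fin n) 𝕂, P = Q ^ (p ^ k) :=
  pth_power_of_translate_pth_power_general p hp k t P d hP hd hpow
end
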